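/- Consider the bilevel problem with n = 1, m = 2, ψ(x,y) = ½y₁² − ½y₂² − x y₁, and constraint set Γ = {(y₁, y₂) | −¼ y₁ ≤ y₂ ≤ ½ y₁}. Then for each x ∈ ℝ, argmin_{y ∈ Γ} ψ(x,y) = {(4x/3, 2x/3)} if x ≥ 0 and {(0,0)} if x < 0, while the set S(x) of stationary points {y | 0 ∈ ∇_y ψ(x,y)ᵀ + N_Γ(y)} equals {(4x/3, 2x/3), (16x/15, −4x/15), (x, 0)} for x ≥ 0 and {(0,0)} for x < 0. In particular, for x > 0, S(x) is not a singleton, and S admits no single-valued localization around (0, (0,0)). -/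
import Mathlib

open Filter Topology Set

/-- The cone `Γ = {y | -y₁/4 ≤ y₂ ≤ y₁/2}` in `ℝ²`. -/
def Γ19 : Set (ℝ × ℝ) := {y | -(1/4) * y.1 ≤ y.2 ∧ y.2 ≤ (1/2) * y.1}

/-- The lower-level objective `ψ(x,y) = ½y₁² − ½y₂² − x y₁`. -/
noncomputable def ψ19 (x : ℝ) (y : ℝ × ℝ) : ℝ := (1/2) * y.1 ^ 2 - (1/2) * y.2 ^ 2 - x * y.1

/-- The global-minimizer map `σ`. -/
noncomputable def σ19 (x : ℝ) : ℝ × ℝ := if 0 ≤ x then (4 * x / 3, 2 * x / 3) else (0, 0)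

/-- The set of stationary points: `0 ∈ ∇_y ψ(x,y)ᵀ + N_Γ(y)`, i.e. `y ∈ Γ` and
`-∇_y ψ(x,y) ∈ N_Γ(y)` with `∇_y ψ(x,y) = (y₁ - x, -y₂)`. -/
def S19 (x : ℝ) : Set (ℝ × ℝ) :=
  {y | y ∈ Γ19 ∧ ∀ z ∈ Γ19,
    (-(y.1 - x)) * (z.1 - y.1) + y.2 * (z.2 - y.2) ≤ 0}

lemma S19_char (x : ℝ) (y : ℝ × ℝ) :
    y ∈ S19 x ↔ y ∈ Γ19 ∧ (x - y.1) * y.1 + y.2 ^ 2 = 0 ∧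
      2 * (x - y.1) + y.2 ≤ 0 ∧ 4 * (x - y.1) - y.2 ≤ 0 := by
  constructor
  · rintro ⟨hG, h⟩
    have hG1 : -(1/4) * y.1 ≤ y.2 := hG.1
    have hG2 : y.2 ≤ (1/2) * y.1 := hG.2
    have hy1 : 0 ≤ y.1 := by linarith
    have h2y : (2 * y.1, 2 * y.2) ∈ Γ19 := by constructor <;> simp <;> linarith
    have h0 : ((0 : ℝ), (0 : ℝ)) ∈ Γ19 := by constructor <;> simp
    have hP1 := h _ h2y
    have hP2 := h _ h0
    simp only at hP1 hP2
    have hP : (x - y.1) * y.1 + y.2 ^ 2 = 0 := by nlinarith [hP1, hP2]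
    refine ⟨hG, hP, ?_, ?_⟩
    · have h21 := h ((2 : ℝ), (1 : ℝ)) (by constructor <;> norm_num)
      norm_num at h21
      nlinarith [h21, hP]
    · have h41 := h ((4 : ℝ), (-1 : ℝ)) (by constructor <;> norm_num)
      norm_num at h41
      nlinarith [h41, hP]
  · rintro ⟨hG, hP, hE1, hE2⟩
    refine ⟨hG, ?_⟩
    rintro z ⟨hz1, hz2⟩
    have h1 : 0 ≤ z.1 + 4 * z.2 := by linarith
    have h2 : 0 ≤ z.1 - 2 * z.2 := by linarith
    nlinarith [mul_nonpos_of_nonneg_of_nonpos h1 hE1,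
      mul_nonpos_of_nonneg_of_nonpos h2 hE2]

lemma S19_pos (x : ℝ) (hx : 0 ≤ x) :
    S19 x = {(4 * x / 3, 2 * x / 3), (16 * x / 15, -(4 * x) / 15), (x, 0)} := by
  ext y
  rw [S19_char]
  constructor
  · rintro ⟨⟨hG1, hG2⟩, hP, hE1, hE2⟩
    have hα : 0 ≤ y.1 + 4 * y.2 := by linarith
    have hβ : 0 ≤ y.1 - 2 * y.2 := by linarith
    have hsum : (y.1 + 4 * y.2) * (2 * (x - y.1) + y.2)
        + (y.1 - 2 * y.2) * (4 * (x - y.1) - y.2) = 0 := by nlinarith [hP]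
    have ht1 : (y.1 + 4 * y.2) * (2 * (x - y.1) + y.2) ≤ 0 :=
      mul_nonpos_of_nonneg_of_nonpos hα hE1
    have ht2 : (y.1 - 2 * y.2) * (4 * (x - y.1) - y.2) ≤ 0 :=
      mul_nonpos_of_nonneg_of_nonpos hβ hE2
    have hz1 : (y.1 + 4 * y.2) * (2 * (x - y.1) + y.2) = 0 := by linarith
    have hz2 : (y.1 - 2 * y.2) * (4 * (x - y.1) - y.2) = 0 := by linarith
    rcases mul_eq_zero.mp hz1 with h1 | h1
    · rcases mul_eq_zero.mp hz2 with h2 | h2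
      · -- y = (0,0), and then x = 0 from hE1
        have hy1 : y.1 = 0 := by linarith
        have hy2 : y.2 = 0 := by linarith
        have hx0 : x = 0 := by
          have : 2 * x ≤ 0 := by linarith [hE1]
          linarith
        right; right
        exact Prod.ext (by simp [hy1, hx0]) (by simp [hy2])
      · -- point B
        right; left
        have hy1 : y.1 = 16 * x / 15 := by linarith
        have hy2 : y.2 = -(4 * x) / 15 := by linarith
        exact Prod.ext hy1 hy2
    · rcases mul_eq_zero.mp hz2 with h2 | h2
      · -- point A
        left
        have hy1 : y.1 = 4 * x / 3 := by linarith
        have hy2 : y.2 = 2 * x / 3 := by linarith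
        exact Prod.ext hy1 hy2
      · -- point C : c1 = c2 = 0
        right; right
        have hy2 : y.2 = 0 := by linarith
        have hy1 : y.1 = x := by linarith
        exact Prod.ext hy1 hy2
  · intro h
    rcases h with h | h | h <;> subst h <;>
      refine ⟨⟨by norm_num <;> linarith, by norm_num <;> linarith⟩, by ring, by norm_num <;> linarith, by norm_num <;> linarith⟩

lemma S19_neg (x : ℝ) (hx : x < 0) : S19 x = {((0 : ℝ), (0 : ℝ))} := by
  ext y
  rw [S19_char]
  constructor
  · rintro ⟨⟨hG1, hG2⟩, hP, hE1, hE2⟩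
    have hy1 : 0 ≤ y.1 := by linarith
    have hle : y.1 ≤ 0 := by
      by_contra h
      push_neg at h
      have hyy : 0 < y.1 * y.1 := mul_pos h h
      nlinarith [mul_nonneg (by linarith : (0:ℝ) ≤ y.1 - 2*y.2) (by linarith : (0:ℝ) ≤ y.1 + 2*y.2),
        mul_neg_of_neg_of_pos hx h]
    have hy10 : y.1 = 0 := le_antisymm hle hy1
    have hy20 : y.2 = 0 := by rw [hy10] at hG1 hG2; simp at hG1 hG2; linarith
    simp [Prod.ext_iff, hy10, hy20]
  · intro h
    rw [mem_singleton_iff] at h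
    subst h
    refine ⟨⟨by norm_num, by norm_num⟩, by ring, by norm_num <;> linarith, by norm_num <;> linarith⟩

lemma argmin_eq (x : ℝ) : {y ∈ Γ19 | ∀ z ∈ Γ19, ψ19 x y ≤ ψ19 x z} = {σ19 x} := by
  ext y
  simp only [mem_setOf_eq, mem_singleton_iff, σ19]
  by_cases hx : 0 ≤ x
  · rw [if_pos hx]
    constructor
    · rintro ⟨⟨hG1, hG2⟩, h⟩
      have hA : ((4 * x / 3, 2 * x / 3) : ℝ × ℝ) ∈ Γ19 := by
        constructor <;> simp <;> linarith
      have key := h _ hA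
      simp only [ψ19] at key
      have hy1 : 0 ≤ y.1 := by linarith
      have hprod : 0 ≤ (y.1 - 2 * y.2) * (y.1 + 2 * y.2) :=
        mul_nonneg (by linarith) (by linarith)
      have hsq : (y.1 - 4 * x / 3) ^ 2 ≤ 0 := by nlinarith [key, hprod]
      have hsq0 : (y.1 - 4 * x / 3) ^ 2 = 0 := le_antisymm hsq (sq_nonneg _)
      have hy1e : y.1 = 4 * x / 3 := by
        have := pow_eq_zero_iff (n := 2) (by norm_num) |>.mp hsq0
        linarith
      have hprod0 : (y.1 - 2 * y.2) * (y.1 + 2 * y.2) = 0 := by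
        have hle : (y.1 - 2 * y.2) * (y.1 + 2 * y.2) ≤ 0 := by nlinarith [key, hsq0]
        linarith
      rcases mul_eq_zero.mp hprod0 with h2 | h2
      · exact Prod.ext hy1e (by linarith)
      · -- y.1 + 2 y.2 = 0 forces y.1 = 0, x = 0
        have : y.1 ≤ 0 := by linarith
        have hx0 : x = 0 := by linarith
        exact Prod.ext hy1e (by simp [hx0]; linarith)
    · rintro rfl
      refine ⟨⟨by simp <;> linarith, by simp <;> linarith⟩, ?_⟩
      rintro z ⟨hz1, hz2⟩
      simp only [ψ19]
      have hz0 : 0 ≤ z.1 := by linarith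
      nlinarith [mul_nonneg (by linarith : (0:ℝ) ≤ z.1 - 2*z.2) (by linarith : (0:ℝ) ≤ z.1 + 2*z.2),
        sq_nonneg (z.1 - 4 * x / 3)]
  · rw [if_neg hx]
    push_neg at hx
    constructor
    · rintro ⟨⟨hG1, hG2⟩, h⟩
      have h0 : ((0 : ℝ), (0 : ℝ)) ∈ Γ19 := by constructor <;> simp
      have key := h _ h0
      simp only [ψ19] at key
      have hy1 : 0 ≤ y.1 := by linarith
      have hle : y.1 ≤ 0 := by
        by_contra hc
        push_neg at hc
        nlinarith [mul_nonneg (by linarith : (0:ℝ) ≤ y.1 - 2*y.2) (by linarith : (0:ℝ) ≤ y.1 + 2*y.2),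
          mul_neg_of_neg_of_pos hx hc, mul_pos hc hc]
      have hy10 : y.1 = 0 := le_antisymm hle hy1
      have hy20 : y.2 = 0 := by rw [hy10] at hG1 hG2; simp at hG1 hG2; linarith
      exact Prod.ext hy10 hy20
    · rintro rfl
      refine ⟨⟨by simp, by simp⟩, ?_⟩
      rintro z ⟨hz1, hz2⟩
      simp only [ψ19]
      have hz0 : 0 ≤ z.1 := by linarith
      nlinarith [mul_nonneg (by linarith : (0:ℝ) ≤ z.1 - 2*z.2) (by linarith : (0:ℝ) ≤ z.1 + 2*z.2),
        mul_nonneg (by linarith : (0:ℝ) ≤ -x) hz0]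

/-- The bilevel example of Section 4: global minimizers and stationary points of the lower
level problem; `S` is not single-valued for `x > 0` and admits no single-valued localization
around `(0, (0,0))`. -/
theorem bilevel_example :
    (∀ x : ℝ, {y ∈ Γ19 | ∀ z ∈ Γ19, ψ19 x y ≤ ψ19 x z} = {σ19 x}) ∧
    (∀ x : ℝ, 0 ≤ x →
      S19 x = {(4 * x / 3, 2 * x / 3), (16 * x / 15, -(4 * x) / 15), (x, 0)}) ∧
    (∀ x : ℝ, x < 0 → S19 x = {((0 : ℝ), (0 : ℝ))}) ∧
    (∀ x : ℝ, 0 < x → ¬ (∃ y : ℝ × ℝ, S19 x = {y})) ∧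
    ¬ (∃ s : ℝ → ℝ × ℝ, ∃ U ∈ 𝓝 (0 : ℝ), ∃ V ∈ 𝓝 ((0, 0) : ℝ × ℝ),
        ∀ x ∈ U, s x ∈ V ∧ ∀ y ∈ V, (y ∈ S19 x ↔ y = s x)) := by
  have hAmem : ∀ x : ℝ, 0 ≤ x → ((4 * x / 3, 2 * x / 3) : ℝ × ℝ) ∈ S19 x := by
    intro x hx
    rw [S19_pos x hx]
    left; rfl
  have hCmem : ∀ x : ℝ, 0 ≤ x → ((x, (0 : ℝ)) : ℝ × ℝ) ∈ S19 x := by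
    intro x hx
    rw [S19_pos x hx]
    right; right; rfl
  refine ⟨argmin_eq, S19_pos, S19_neg, ?_, ?_⟩
  · rintro x hx ⟨y, hy⟩
    have hA := hAmem x hx.le
    have hC := hCmem x hx.le
    rw [hy, mem_singleton_iff] at hA hC
    have hxx := congrArg Prod.fst (hA.trans hC.symm)
    simp at hxx
    linarith
  · rintro ⟨s, U, hU, V, hV, h⟩
    obtain ⟨δ, hδ, hδU⟩ := Metric.mem_nhds_iff.mp hU
    obtain ⟨ε, hε, hεV⟩ := Metric.mem_nhds_iff.mp hV
    set x : ℝ := min δ ε / 2 with hxdef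
    have hx0 : 0 < x := by positivity
    have hxδ : x < δ := by
      have : min δ ε ≤ δ := min_le_left _ _
      linarith
    have hxε : 4 * x / 3 < ε := by
      have : min δ ε ≤ ε := min_le_right _ _
      linarith
    have hxU : x ∈ U := by
      apply hδU
      simp [Real.dist_eq, abs_of_pos hx0, hxδ]
    have hAV : ((4 * x / 3, 2 * x / 3) : ℝ × ℝ) ∈ V := by
      apply hεV
      simp only [Metric.mem_ball, Prod.dist_eq, Real.dist_eq]
      rw [max_lt_iff]
      constructor <;> rw [abs_of_nonneg (by linarith)] <;> linarith
    have hCV : ((x, (0 : ℝ)) : ℝ × ℝ) ∈ V := by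
      apply hεV
      simp only [Metric.mem_ball, Prod.dist_eq, Real.dist_eq]
      rw [max_lt_iff]
      constructor <;> rw [abs_of_nonneg (by linarith)] <;> linarith
    obtain ⟨-, hloc⟩ := h x hxU
    have e1 := (hloc _ hAV).mp (hAmem x hx0.le)
    have e2 := (hloc _ hCV).mp (hCmem x hx0.le)
    rw [← e2] at e1
    have := congrArg Prod.fst e1
    simp at this
    linarith
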